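/- arXiv:1611.01818 — 6 statements merged into one kernel-verified Lean document; each statement's English description precedes it below -/
import Mathlib

section
/- Let G be a simple graph on a finite nonempty vertex set and let 0 ≤ β < α ≤ 1 be real numbers. Then the smallest eigenvalue of A_β(G) is at most the smallest eigenvalue of A_α(G); that is, λ_min(A_α(G)) − λ_min(A_β(G)) ≥ 0. -/
/-!
`A_α(G) - A_β(G) = (α - β) L(G)` with `L(G) = D(G) - A(G)` the Laplacian, which is positive
semidefinite. The smallest eigenvalue is monotone in the Loewner order, because `M - c I ⪰ 0`
holds exactly when `c ≤ λ_min(M)`.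
-/

open Matrix SimpleGraph

/-- Adjacency matrix of `G` over `ℝ`. -/
noncomputable def adjM {V : Type*} [Fintype V] (G : SimpleGraph V) : Matrix V V ℝ := by
  classical exact G.adjMatrix ℝ

/-- Diagonal matrix of vertex degrees of `G`, over `ℝ`. -/
noncomputable def degM {V : Type*} [Fintype V] (G : SimpleGraph V) : Matrix V V ℝ := by
  classical exact Matrix.diagonal fun v => (G.degree v : ℝ)

/-- `A_α(G) = α·D(G) + (1-α)·A(G)`. -/
noncomputable def Amix {V : Type*} [Fintype V] (G : SimpleGraph V) (α : ℝ) : Matrix V V ℝ :=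
  α • degM G + (1 - α) • adjM G

/-- Smallest eigenvalue of a real symmetric matrix (junk value `0` otherwise). -/
noncomputable def lambdaMin {n : Type*} [Fintype n] (M : Matrix n n ℝ) : ℝ := by
  classical exact if h : M.IsHermitian then ⨅ i, h.eigenvalues i else 0

/-- Largest eigenvalue of a real symmetric matrix (junk value `0` otherwise). -/
noncomputable def lambdaMax {n : Type*} [Fintype n] (M : Matrix n n ℝ) : ℝ := by
  classical exact if h : M.IsHermitian then ⨆ i, h.eigenvalues i else 0

/-- `α₀(G)`: the smallest `α ∈ [0,1]` such that `A_α(G)` is positive semidefinite. -/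
noncomputable def alpha0 {V : Type*} [Fintype V] (G : SimpleGraph V) : ℝ :=
  sInf {α : ℝ | α ∈ Set.Icc (0:ℝ) 1 ∧ (Amix G α).PosSemidef}

section LambdaMin

variable {n : Type*} [Fintype n] {M N : Matrix n n ℝ}

lemma lambdaMin_eq_iInf [DecidableEq n] (hM : M.IsHermitian) :
    lambdaMin M = ⨅ i, hM.eigenvalues i := by
  rw [lambdaMin, dif_pos hM]
  congr!

variable [DecidableEq n] [Nonempty n]

lemma posSemidef_sub_smul_one_iff_le_lambdaMin (hM : M.IsHermitian) {c : ℝ} :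
    (M - c • 1).PosSemidef ↔ c ≤ lambdaMin M := by
  have hM_sub : (M - c • 1).IsHermitian := hM.sub (isHermitian_one.smul (IsSelfAdjoint.all c))
  rw [posSemidef_iff_isHermitian_and_spectrum_nonneg, and_iff_right hM_sub,
    ← Algebra.algebraMap_eq_smul_one, ← spectrum.sub_singleton_eq,
    hM.spectrum_real_eq_range_eigenvalues, lambdaMin_eq_iInf hM,
    le_ciInf_iff (Set.finite_range _).bddBelow]
  simp [Set.sub_singleton, Set.range_subset_iff]

lemma lambdaMin_mono (hM : M.IsHermitian) (hN : N.IsHermitian) (h : (N - M).PosSemidef) :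
    lambdaMin M ≤ lambdaMin N := by
  rw [← posSemidef_sub_smul_one_iff_le_lambdaMin hN, ← sub_add_sub_cancel N M]
  exact h.add ((posSemidef_sub_smul_one_iff_le_lambdaMin hM).2 le_rfl)

end LambdaMin

section Amix

variable {V : Type*} [Fintype V] (G : SimpleGraph V)

lemma degM_eq_degMatrix [DecidableEq V] [DecidableRel G.Adj] : degM G = G.degMatrix ℝ := by
  unfold degM degMatrix
  congr!

lemma adjM_eq_adjMatrix [DecidableRel G.Adj] : adjM G = G.adjMatrix ℝ := by
  unfold adjM
  congr!

lemma isHermitian_Amix (γ : ℝ) : (Amix G γ).IsHermitian := by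
  classical
  rw [Amix, degM_eq_degMatrix, adjM_eq_adjMatrix]
  exact ((isHermitian_diagonal _).smul (IsSelfAdjoint.all γ)).add
    ((G.isHermitian_adjMatrix ℝ).smul (IsSelfAdjoint.all _))

lemma Amix_sub_Amix [DecidableEq V] [DecidableRel G.Adj] (α β : ℝ) :
    Amix G α - Amix G β = (α - β) • G.lapMatrix ℝ := by
  rw [Amix, Amix, degM_eq_degMatrix, adjM_eq_adjMatrix, lapMatrix, smul_sub]
  module

end Amix

theorem stmt_0_general {V : Type*} [Fintype V] [Nonempty V] (G : SimpleGraph V)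
    (α β : ℝ) (hβα : β < α) :
    0 ≤ lambdaMin (Amix G α) - lambdaMin (Amix G β) := by
  classical
  rw [sub_nonneg]
  refine lambdaMin_mono (isHermitian_Amix G β) (isHermitian_Amix G α) ?_
  rw [Amix_sub_Amix]
  exact (G.posSemidef_lapMatrix ℝ).smul (sub_nonneg.2 hβα.le)

/-- For 0 ≤ β < α ≤ 1, λ_min(A_α(G)) − λ_min(A_β(G)) ≥ 0. -/
theorem stmt_0 {V : Type*} [Fintype V] [Nonempty V] (G : SimpleGraph V)
    (α β : ℝ) (hβ : 0 ≤ β) (hβα : β < α) (hα : α ≤ 1) :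
    0 ≤ lambdaMin (Amix G α) - lambdaMin (Amix G β) :=
  stmt_0_general G α β hβα
end

section
/- Let G be a simple graph on a finite nonempty vertex set, let L(G) = D(G) − A(G) be its Laplacian matrix, and let 0 ≤ β < α ≤ 1 be real numbers. Then λ_min(A_α(G)) − λ_min(A_β(G)) ≤ (α − β)·λ_max(L(G)), where λ_max denotes the largest eigenvalue. -/
open Matrix SimpleGraph

/-! Since `A_β = A_α - (α - β) L`, the claim is the Weyl-type bound
`λ_min (M - c N) ≥ λ_min M - c λ_max N` for `c ≥ 0`. Both extreme eigenvalues are read off the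
spectrum, so `c ≤ λ_min M ↔ M - c I ⪰ 0` and `λ_max N ≤ c ↔ c I - N ⪰ 0`; the bound is then the sum
of the two semidefinite matrices `M - λ_min M • I` and `c (λ_max N • I - N)`. -/

namespace Matrix.IsHermitian

variable {n : Type*} [Fintype n] [DecidableEq n] {M N : Matrix n n ℝ}

lemma posSemidef_iff_spectrum_nonneg (hM : M.IsHermitian) :
    M.PosSemidef ↔ ∀ x ∈ spectrum ℝ M, 0 ≤ x := by
  simp [hM.posSemidef_iff_eigenvalues_nonneg, hM.spectrum_real_eq_range_eigenvalues, Pi.le_def]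

lemma lambdaMin_eq_sInf_spectrum (hM : M.IsHermitian) : lambdaMin M = sInf (spectrum ℝ M) := by
  rw [hM.spectrum_real_eq_range_eigenvalues, lambdaMin, dif_pos hM, sInf_range]
  -- `lambdaMin` computes the eigenvalues with the classical `DecidableEq n` instance
  convert rfl

lemma lambdaMax_eq_sSup_spectrum (hM : M.IsHermitian) : lambdaMax M = sSup (spectrum ℝ M) := by
  rw [hM.spectrum_real_eq_range_eigenvalues, lambdaMax, dif_pos hM, sSup_range]
  convert rfl

lemma spectrum_nonempty [Nonempty n] (hM : M.IsHermitian) : (spectrum ℝ M).Nonempty := by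
  rw [hM.spectrum_real_eq_range_eigenvalues]
  exact Set.range_nonempty _

lemma le_lambdaMin_iff [Nonempty n] (hM : M.IsHermitian) {c : ℝ} :
    c ≤ lambdaMin M ↔ (M - c • 1).PosSemidef := by
  have hshift : (M - c • 1).IsHermitian := hM.sub (isHermitian_one.smul (.all c))
  rw [hM.lambdaMin_eq_sInf_spectrum,
    le_csInf_iff M.finite_real_spectrum.bddBelow hM.spectrum_nonempty,
    hshift.posSemidef_iff_spectrum_nonneg, ← Algebra.algebraMap_eq_smul_one,
    ← spectrum.sub_singleton_eq]
  simp [sub_nonneg]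

lemma lambdaMax_le_iff [Nonempty n] (hM : M.IsHermitian) {c : ℝ} :
    lambdaMax M ≤ c ↔ (c • 1 - M).PosSemidef := by
  have hshift : (c • 1 - M).IsHermitian := (isHermitian_one.smul (.all c)).sub hM
  rw [hM.lambdaMax_eq_sSup_spectrum,
    csSup_le_iff M.finite_real_spectrum.bddAbove hM.spectrum_nonempty,
    hshift.posSemidef_iff_spectrum_nonneg, ← Algebra.algebraMap_eq_smul_one,
    ← spectrum.singleton_sub_eq]
  simp [sub_nonneg]

lemma lambdaMin_sub_mul_lambdaMax_le [Nonempty n] (hM : M.IsHermitian) (hN : N.IsHermitian)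
    {c : ℝ} (hc : 0 ≤ c) : lambdaMin M - c * lambdaMax N ≤ lambdaMin (M - c • N) := by
  have hM' : (M - lambdaMin M • 1).PosSemidef := hM.le_lambdaMin_iff.1 le_rfl
  have hN' : (lambdaMax N • 1 - N).PosSemidef := hN.lambdaMax_le_iff.1 le_rfl
  rw [(hM.sub (hN.smul (.all c))).le_lambdaMin_iff]
  convert hM'.add (hN'.smul hc) using 1
  module

end Matrix.IsHermitian

namespace SimpleGraph

variable {V : Type*} [Fintype V] (G : SimpleGraph V)

lemma isHermitian_adjM : (adjM G).IsHermitian := by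
  classical
  exact G.isHermitian_adjMatrix ℝ

lemma isHermitian_degM : (degM G).IsHermitian := by
  classical
  exact isHermitian_diagonal _

lemma isHermitian_Amix (α : ℝ) : (Amix G α).IsHermitian :=
  (G.isHermitian_degM.smul (.all α)).add (G.isHermitian_adjM.smul (.all (1 - α)))

lemma Amix_sub_smul_degM_sub_adjM (α β : ℝ) :
    Amix G α - (α - β) • (degM G - adjM G) = Amix G β := by
  unfold Amix
  module

end SimpleGraph

theorem stmt_1_general {V : Type*} [Fintype V] [Nonempty V] (G : SimpleGraph V)
    (α β : ℝ) (hβα : β < α) :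
    lambdaMin (Amix G α) - lambdaMin (Amix G β) ≤ (α - β) * lambdaMax (degM G - adjM G) := by
  classical
  have h := (G.isHermitian_Amix α).lambdaMin_sub_mul_lambdaMax_le
    (G.isHermitian_degM.sub G.isHermitian_adjM) (sub_nonneg.2 hβα.le)
  rw [G.Amix_sub_smul_degM_sub_adjM] at h
  linarith

/-- For 0 ≤ β < α ≤ 1,
λ_min(A_α(G)) − λ_min(A_β(G)) ≤ (α − β)·λ_max(L(G)), where L(G) = D(G) − A(G). -/
theorem stmt_1 {V : Type*} [Fintype V] [Nonempty V] (G : SimpleGraph V)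
    (α β : ℝ) (hβ : 0 ≤ β) (hβα : β < α) (hα : α ≤ 1) :
    lambdaMin (Amix G α) - lambdaMin (Amix G β) ≤ (α - β) * lambdaMax (degM G - adjM G) :=
  stmt_1_general G α β hβα
end

section
/- Let G be a simple graph on a finite vertex set and let α be a real number with 1/2 ≤ α ≤ 1. Then the matrix A_α(G) is positive semidefinite. -/
open Matrix SimpleGraph

/-! For `α ≥ 1/2` write `A_α(G) = (1 - α)(D + A) + (2α - 1) D` with both coefficients nonnegative.
The diagonal `D` is nonnegative, and the signless Laplacian `D + A = N Nᵀ` is a Gram matrix,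
`N` being the vertex–edge incidence matrix. -/

namespace SimpleGraph

variable {V R : Type*} [Fintype V] [DecidableEq V] (G : SimpleGraph V) [DecidableRel G.Adj]

theorem diagonal_degree_add_adjMatrix [CommRing R] :
    diagonal (fun v => (G.degree v : R)) + G.adjMatrix R = G.incMatrix R * (G.incMatrix R)ᵀ := by
  rw [incMatrix_mul_transpose]
  ext v w
  by_cases h : v = w
  · subst h; simp
  · simp [h]

theorem posSemidef_diagonal_degree_add_adjMatrix [CommRing R] [PartialOrder R] [StarRing R]
    [StarOrderedRing R] [TrivialStar R] :
    (diagonal (fun v => (G.degree v : R)) + G.adjMatrix R).PosSemidef := by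
  rw [diagonal_degree_add_adjMatrix, ← conjTranspose_eq_transpose_of_trivial]
  exact posSemidef_self_mul_conjTranspose _

end SimpleGraph

section

variable {V : Type*} [Fintype V] (G : SimpleGraph V)

theorem posSemidef_degM : (degM G).PosSemidef := by
  classical
  exact PosSemidef.diagonal fun v => Nat.cast_nonneg _

theorem posSemidef_degM_add_adjM : (degM G + adjM G).PosSemidef := by
  classical
  exact G.posSemidef_diagonal_degree_add_adjMatrix

theorem Amix_eq_smul_add_smul (α : ℝ) :
    Amix G α = (1 - α) • (degM G + adjM G) + (2 * α - 1) • degM G := by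
  rw [Amix]
  module

end

/-- If 1/2 ≤ α ≤ 1, then A_α(G) is positive semidefinite. -/
theorem stmt_3 {V : Type*} [Fintype V] (G : SimpleGraph V)
    (α : ℝ) (hα₁ : 1 / 2 ≤ α) (hα₂ : α ≤ 1) :
    (Amix G α).PosSemidef := by
  rw [Amix_eq_smul_add_smul]
  exact ((posSemidef_degM_add_adjM G).smul (by linarith)).add
    ((posSemidef_degM G).smul (by linarith))
end

section
/- Let G be a simple graph on a finite nonempty vertex set with no isolated vertices (every vertex has degree at least 1), and let α be a real number with 1/2 < α ≤ 1. Then the matrix A_α(G) is positive definite. -/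
open Matrix SimpleGraph

/-!
On every edge `2 |x i * x j| ≤ x i ^ 2 + x j ^ 2`, so summing over edges gives
`|xᵀ A x| ≤ xᵀ D x`. Hence `xᵀ A_α x = α xᵀ D x + (1 - α) xᵀ A x ≥ (α - |1 - α|) xᵀ D x`, and
the coefficient `α - |1 - α|` is positive exactly when `1 / 2 < α`. Without isolated vertices
`D` is a positive diagonal matrix, so `xᵀ D x > 0` for `x ≠ 0`.
-/

namespace SimpleGraph

variable {V : Type*} [Fintype V] (G : SimpleGraph V) [DecidableRel G.Adj]

theorem sum_sum_ite_adj_add {R : Type*} [CommSemiring R] (f : V → R) :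
    ∑ i, ∑ j, (if G.Adj i j then f i + f j else 0) = 2 * ∑ i, (G.degree i : R) * f i := by
  have hleft : ∑ i, ∑ j, (if G.Adj i j then f i else 0) = ∑ i, (G.degree i : R) * f i := by
    simp_rw [degree_eq_sum_if_adj, Finset.sum_mul, ite_mul, one_mul, zero_mul]
  have hright : ∑ i, ∑ j, (if G.Adj i j then f j else 0) = ∑ i, (G.degree i : R) * f i := by
    rw [Finset.sum_comm, ← hleft]
    simp_rw [G.adj_comm]
  simp_rw [ite_add_zero, Finset.sum_add_distrib, hleft, hright, two_mul]

variable [DecidableEq V]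

theorem abs_dotProduct_mulVec_adjMatrix_le {R : Type*} [CommRing R] [LinearOrder R]
    [IsStrictOrderedRing R] (x : V → R) :
    |x ⬝ᵥ G.adjMatrix R *ᵥ x| ≤ x ⬝ᵥ G.degMatrix R *ᵥ x := by
  have hedge : ∀ i j, 2 * |if G.Adj i j then x i * x j else 0|
      ≤ if G.Adj i j then x i ^ 2 + x j ^ 2 else 0 := by
    intro i j
    split_ifs
    · simpa [abs_mul, mul_assoc] using two_mul_le_add_sq |x i| |x j|
    · simp
  refine le_of_mul_le_mul_left ?_ two_pos
  calc 2 * |x ⬝ᵥ G.adjMatrix R *ᵥ x|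
      ≤ 2 * ∑ i, ∑ j, |if G.Adj i j then x i * x j else 0| := by
        rw [dotProduct_mulVec_adjMatrix]
        exact mul_le_mul_of_nonneg_left ((Finset.abs_sum_le_sum_abs _ _).trans
          (Finset.sum_le_sum fun i _ => Finset.abs_sum_le_sum_abs _ _)) zero_le_two
    _ ≤ ∑ i, ∑ j, if G.Adj i j then x i ^ 2 + x j ^ 2 else 0 := by
        simp_rw [Finset.mul_sum]
        exact Finset.sum_le_sum fun i _ => Finset.sum_le_sum fun j _ => hedge i j
    _ = 2 * (x ⬝ᵥ G.degMatrix R *ᵥ x) := by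
        simp_rw [G.sum_sum_ite_adj_add, dotProduct_mulVec_degMatrix, sq, mul_assoc]

theorem posDef_degMatrix {R : Type*} [CommRing R] [PartialOrder R] [StarRing R]
    [StarOrderedRing R] [NoZeroDivisors R] [Nontrivial R] (hdeg : ∀ v, 1 ≤ G.degree v) :
    (G.degMatrix R).PosDef :=
  .diagonal fun v => by exact_mod_cast hdeg v

theorem posDef_smul_degMatrix_add_smul_adjMatrix (hdeg : ∀ v, 1 ≤ G.degree v) {α : ℝ}
    (hα : 1 / 2 < α) : (α • G.degMatrix ℝ + (1 - α) • G.adjMatrix ℝ).PosDef := by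
  refine posDef_iff_dotProduct_mulVec.mpr ⟨?_, fun x hx => ?_⟩
  · exact ((G.isHermitian_degMatrix ℝ).smul (.all α)).add
      ((G.isHermitian_adjMatrix ℝ).smul (.all (1 - α)))
  have hdeg_pos : 0 < x ⬝ᵥ G.degMatrix ℝ *ᵥ x := by
    simpa using (G.posDef_degMatrix hdeg).dotProduct_mulVec_pos hx
  have hadj : -(|1 - α| * (x ⬝ᵥ G.degMatrix ℝ *ᵥ x)) ≤ (1 - α) * (x ⬝ᵥ G.adjMatrix ℝ *ᵥ x) :=
    calc -(|1 - α| * (x ⬝ᵥ G.degMatrix ℝ *ᵥ x))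
        ≤ -|(1 - α) * (x ⬝ᵥ G.adjMatrix ℝ *ᵥ x)| := by
          rw [abs_mul]
          exact neg_le_neg <| mul_le_mul_of_nonneg_left
            (G.abs_dotProduct_mulVec_adjMatrix_le x) (abs_nonneg _)
      _ ≤ (1 - α) * (x ⬝ᵥ G.adjMatrix ℝ *ᵥ x) := neg_abs_le _
  have hcoef : 0 < α - |1 - α| := by rw [sub_pos, abs_lt]; constructor <;> linarith
  rw [star_trivial, add_mulVec, dotProduct_add, smul_mulVec, smul_mulVec, dotProduct_smul,
    dotProduct_smul, smul_eq_mul, smul_eq_mul]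
  linarith [mul_pos hcoef hdeg_pos]

end SimpleGraph

theorem Amix_eq_smul_degMatrix_add_smul_adjMatrix {V : Type*} [Fintype V] [DecidableEq V]
    (G : SimpleGraph V) [DecidableRel G.Adj] (α : ℝ) :
    Amix G α = α • G.degMatrix ℝ + (1 - α) • G.adjMatrix ℝ := by
  unfold Amix degM adjM degMatrix
  congr!

theorem stmt_4_general {V : Type*} [Fintype V] (G : SimpleGraph V)
    [DecidableRel G.Adj] (hdeg : ∀ v : V, 1 ≤ G.degree v)
    (α : ℝ) (hα₁ : 1 / 2 < α) :
    (Amix G α).PosDef := by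
  classical
  rw [Amix_eq_smul_degMatrix_add_smul_adjMatrix]
  exact G.posDef_smul_degMatrix_add_smul_adjMatrix hdeg hα₁

/-- If G has no isolated vertices (all degrees ≥ 1) and 1/2 < α ≤ 1,
then A_α(G) is positive definite. -/
theorem stmt_4 {V : Type*} [Fintype V] [Nonempty V] (G : SimpleGraph V)
    [DecidableRel G.Adj] (hdeg : ∀ v : V, 1 ≤ G.degree v)
    (α : ℝ) (hα₁ : 1 / 2 < α) (hα₂ : α ≤ 1) :
    (Amix G α).PosDef :=
  stmt_4_general G hdeg α hα₁
end

section
/- Let G be a simple graph on n ≥ 1 vertices with m edges and chromatic number χ ≥ 2, and let α be a real number with 0 ≤ α ≤ 1. Then λ_min(A_α(G)) ≤ (α·χ − 1)·2m / ((χ − 1)·n). -/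
open Matrix SimpleGraph

/-! Colour `G` properly with `χ` colours and, for each colour `i`, take the test vector
`yᵢ = χ · 1_{colour class i} - 1`. Then `∑ᵢ yᵢ(u) yᵢ(v)` is `χ(χ - 1)` for `u = v` and `-χ`
for adjacent `u, v`, so summing the Rayleigh quotient bounds over the colours gives
`λ_min · nχ(χ - 1) ≤ ∑ᵢ yᵢᵀ A_α yᵢ = 2mχ(αχ - 1)`. -/

open scoped MatrixOrder in
lemma Matrix.IsHermitian.iInf_eigenvalues_mul_dotProduct_self_le {n : Type*} [Fintype n]
    [DecidableEq n] {M : Matrix n n ℝ} (hM : M.IsHermitian) (x : n → ℝ) :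
    (⨅ i, hM.eigenvalues i) * (x ⬝ᵥ x) ≤ x ⬝ᵥ M *ᵥ x := by
  have hle : algebraMap ℝ _ (⨅ i, hM.eigenvalues i) ≤ M := by
    rw [algebraMap_le_iff_le_spectrum hM.isSelfAdjoint, hM.spectrum_real_eq_range_eigenvalues]
    rintro _ ⟨i, rfl⟩
    exact ciInf_le (Finite.bddBelow_range _) i
  simpa [sub_mulVec, Algebra.algebraMap_eq_smul_one, smul_mulVec, dotProduct_smul] using
    (le_iff.mp hle).dotProduct_mulVec_nonneg x

lemma lambdaMin_mul_dotProduct_self_le {n : Type*} [Fintype n] {M : Matrix n n ℝ}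
    (hM : M.IsHermitian) (x : n → ℝ) : lambdaMin M * (x ⬝ᵥ x) ≤ x ⬝ᵥ M *ᵥ x := by
  classical
  rw [lambdaMin, dif_pos hM]
  exact hM.iInf_eigenvalues_mul_dotProduct_self_le x

lemma sum_dotProduct_mulVec {ι n R : Type*} [Fintype ι] [Fintype n] [CommSemiring R]
    (M : Matrix n n R) (y : ι → n → R) :
    ∑ i, y i ⬝ᵥ M *ᵥ y i = ∑ u, ∑ v, M u v * ∑ i, y i u * y i v := by
  simp only [dotProduct, mulVec, Finset.mul_sum]
  rw [Finset.sum_comm]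
  refine Finset.sum_congr rfl fun u _ => ?_
  rw [Finset.sum_comm]
  exact Finset.sum_congr rfl fun v _ => Finset.sum_congr rfl fun i _ => by ring

lemma isHermitian_Amix_s14 {V : Type*} [Fintype V] (G : SimpleGraph V) (α : ℝ) :
    (Amix G α).IsHermitian := by
  classical
  have hdeg : (degM G).IsHermitian := isHermitian_diagonal _
  have hadj : (adjM G).IsHermitian := G.isHermitian_adjMatrix ℝ
  exact (hdeg.smul (IsSelfAdjoint.all α)).add (hadj.smul (IsSelfAdjoint.all _))

section Amix

variable {V : Type*} [Fintype V] [DecidableEq V] (G : SimpleGraph V) [DecidableRel G.Adj]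

lemma Amix_apply (α : ℝ) (u v : V) :
    Amix G α u v = (if u = v then α * G.degree u else 0) + if G.Adj u v then 1 - α else 0 := by
  simp only [Amix, degM, adjM, Matrix.add_apply, Matrix.smul_apply, diagonal_apply,
    adjMatrix_apply, smul_eq_mul, mul_ite, mul_one, mul_zero]
  congr!

lemma sum_Amix_apply_mul {K : V → V → ℝ} {a b : ℝ} (hdiag : ∀ u, K u u = a)
    (hadj : ∀ u v, G.Adj u v → K u v = b) (α : ℝ) (u : V) :
    ∑ v, Amix G α u v * K u v = G.degree u * (α * a + (1 - α) * b) := by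
  have hterm : ∀ v, Amix G α u v * K u v =
      (if u = v then α * G.degree u * a else 0) + if G.Adj u v then (1 - α) * b else 0 := by
    intro v
    rw [Amix_apply]
    by_cases huv : u = v
    · subst huv; simp [hdiag]
    · by_cases h : G.Adj u v <;> simp [huv, h, hadj u v]
  simp only [hterm, Finset.sum_add_distrib, Finset.sum_ite_eq, Finset.mem_univ, if_true,
    ← Finset.sum_filter, Finset.sum_const, ← card_neighborFinset_eq_degree,
    neighborFinset_eq_filter, nsmul_eq_mul]
  ring

lemma sum_sum_Amix_apply_mul {K : V → V → ℝ} {a b : ℝ} (hdiag : ∀ u, K u u = a)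
    (hadj : ∀ u v, G.Adj u v → K u v = b) (α : ℝ) :
    ∑ u, ∑ v, Amix G α u v * K u v = 2 * G.edgeFinset.card * (α * a + (1 - α) * b) := by
  simp only [sum_Amix_apply_mul G hdiag hadj, ← Finset.sum_mul]
  rw [← Nat.cast_sum, sum_degrees_eq_twice_card_edges]
  push_cast
  ring

end Amix

def colorVector {V : Type*} {k : ℕ} (c : V → Fin k) (i : Fin k) (v : V) : ℝ :=
  if c v = i then k - 1 else -1

lemma sum_colorVector_mul {V : Type*} {k : ℕ} (c : V → Fin k) (u v : V) :
    ∑ i, colorVector c i u * colorVector c i v =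
      if c u = c v then (k : ℝ) * (k - 1) else -(k : ℝ) := by
  have hterm : ∀ i, colorVector c i u * colorVector c i v =
      (k : ℝ) ^ 2 * (if c u = i then (if c v = i then 1 else 0) else 0)
        - k * (if c u = i then 1 else 0) - k * (if c v = i then 1 else 0) + 1 := by
    intro i; unfold colorVector; split_ifs <;> ring
  simp only [hterm, Finset.sum_add_distrib, Finset.sum_sub_distrib, ← Finset.mul_sum,
    Finset.sum_ite_eq, Finset.mem_univ, if_true, Finset.sum_const, Finset.card_univ,
    Fintype.card_fin]
  rcases eq_or_ne (c u) (c v) with h | h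
  · simp [h]; ring
  · simp [h, h.symm]

theorem stmt_14_general {V : Type*} [Fintype V] [DecidableEq V] (G : SimpleGraph V)
    [DecidableRel G.Adj]
    (n : ℕ) (hn : n = Fintype.card V) (hn1 : 1 ≤ n)
    (m : ℕ) (hm : m = G.edgeFinset.card)
    (χ : ℕ) (hχ : G.chromaticNumber = χ) (hχ2 : 2 ≤ χ)
    (α : ℝ) :
    lambdaMin (Amix G α) ≤ (α * χ - 1) * (2 * m) / ((χ - 1) * n) := by
  obtain ⟨C⟩ : G.Colorable χ := chromaticNumber_le_iff_colorable.mp hχ.le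
  set y := colorVector C
  have hdiag (u : V) : ∑ i, y i u * y i u = χ * (χ - 1) := by simp [y, sum_colorVector_mul]
  have hadj (u v : V) (h : G.Adj u v) : ∑ i, y i u * y i v = -χ := by
    simp [y, sum_colorVector_mul, C.valid h]
  have hnorm : ∑ i, y i ⬝ᵥ y i = n * (χ * (χ - 1)) := by
    simp only [dotProduct]
    rw [Finset.sum_comm]
    simp [hdiag, hn]
  have hform :
      ∑ i, y i ⬝ᵥ Amix G α *ᵥ y i = 2 * m * (α * (χ * (χ - 1)) + (1 - α) * -χ) := by
    rw [sum_dotProduct_mulVec, sum_sum_Amix_apply_mul G hdiag hadj, hm]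
  have hrayleigh : lambdaMin (Amix G α) * (n * (χ * (χ - 1))) ≤
      2 * m * (α * (χ * (χ - 1)) + (1 - α) * -χ) := by
    rw [← hnorm, ← hform, Finset.mul_sum]
    exact Finset.sum_le_sum fun i _ => lambdaMin_mul_dotProduct_self_le (isHermitian_Amix_s14 G α) _
  have hχ1 : (1 : ℝ) < χ := by exact_mod_cast hχ2
  have hn0 : (0 : ℝ) < n := by exact_mod_cast hn1
  rw [le_div_iff₀ (by nlinarith)]
  refine le_of_mul_le_mul_right ?_ (by linarith : (0 : ℝ) < χ)
  linarith

/-- If G has order n ≥ 1, size m, chromatic number χ ≥ 2, and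
0 ≤ α ≤ 1, then λ_min(A_α(G)) ≤ (α·χ − 1)·2m / ((χ − 1)·n). -/
theorem stmt_14 {V : Type*} [Fintype V] [DecidableEq V] (G : SimpleGraph V)
    [DecidableRel G.Adj]
    (n : ℕ) (hn : n = Fintype.card V) (hn1 : 1 ≤ n)
    (m : ℕ) (hm : m = G.edgeFinset.card)
    (χ : ℕ) (hχ : G.chromaticNumber = χ) (hχ2 : 2 ≤ χ)
    (α : ℝ) (hα₁ : 0 ≤ α) (hα₂ : α ≤ 1) :
    lambdaMin (Amix G α) ≤ (α * χ - 1) * (2 * m) / ((χ - 1) * n) :=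
  stmt_14_general G n hn hn1 m hm χ hχ hχ2 α
end

section
/- Let G be a simple graph on a finite vertex set containing at least one edge, and let r ≥ 2 be an integer such that G is r-colorable (its chromatic number is at most r). Then α₀(G) ≥ 1/r. -/
open Matrix SimpleGraph

/-!
For a proper colouring `c` with `r` colours, take one test vector per colour,
`x_i = r · 𝟙[c = i] - 1`. Then `∑_i x_i(u)² = r (r - 1)` and `∑_i x_i(u) x_i(v) = -r` whenever
`c u ≠ c v`, in particular along every edge. Writing `x ⬝ A_α x` as a sum over ordered edges
`(u, v)` of `α x(u)² + (1 - α) x(u) x(v)` gives `∑_i x_i ⬝ A_α x_i = (∑_u deg u) · r (α r - 1)`,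
which is negative if `α < 1/r` and `G` has an edge; so `A_α` can only be positive semidefinite
for `α ≥ 1/r`.
-/

section ColorClassVector

variable {V ι : Type*} [Fintype ι]

noncomputable def colorClassVector [DecidableEq ι] (f : V → ι) (i : ι) (v : V) : ℝ :=
  if f v = i then (Fintype.card ι : ℝ) - 1 else -1

theorem sum_colorClassVector_mul [DecidableEq ι] (f : V → ι) (u v : V) :
    ∑ i, colorClassVector f i u * colorClassVector f i v =
      Fintype.card ι * (Fintype.card ι * (if f u = f v then 1 else 0) - 1) := by
  have hexpand : ∀ i, colorClassVector f i u * colorClassVector f i v =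
      (Fintype.card ι : ℝ) ^ 2 * (if f v = i then (if f u = i then 1 else 0) else 0)
        - Fintype.card ι * (if f u = i then 1 else 0)
        - Fintype.card ι * (if f v = i then 1 else 0) + 1 := by
    intro i
    unfold colorClassVector
    split_ifs <;> ring
  simp only [hexpand, Finset.sum_add_distrib, Finset.sum_sub_distrib, ← Finset.mul_sum,
    Finset.sum_ite_eq, Finset.mem_univ, if_true, Finset.sum_const, Finset.card_univ,
    nsmul_eq_mul, mul_one]
  ring

end ColorClassVector

namespace SimpleGraph

variable {V : Type*} [Fintype V]

theorem degM_eq [DecidableEq V] (G : SimpleGraph V) [DecidableRel G.Adj] :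
    degM G = Matrix.diagonal fun v => (G.degree v : ℝ) := by
  unfold degM; convert rfl

theorem adjM_eq (G : SimpleGraph V) [DecidableEq V] [DecidableRel G.Adj] :
    adjM G = G.adjMatrix ℝ := by
  unfold adjM; convert rfl

theorem amix_one (G : SimpleGraph V) : Amix G 1 = degM G := by
  simp [Amix]

theorem posSemidef_degM (G : SimpleGraph V) : (degM G).PosSemidef := by
  classical
  rw [degM_eq]
  exact Matrix.PosSemidef.diagonal fun v => Nat.cast_nonneg _

theorem le_alpha0 (G : SimpleGraph V) {a : ℝ} (h : ∀ α, (Amix G α).PosSemidef → a ≤ α) :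
    a ≤ alpha0 G := by
  refine le_csInf ⟨1, ⟨zero_le_one, le_rfl⟩, ?_⟩ fun α hα => h α hα.2
  rw [amix_one]
  exact posSemidef_degM G

theorem dotProduct_amix_mulVec [DecidableEq V] (G : SimpleGraph V) [DecidableRel G.Adj]
    (α : ℝ) (x : V → ℝ) :
    x ⬝ᵥ (Amix G α *ᵥ x) = ∑ u, ∑ v ∈ G.neighborFinset u, (α * x u ^ 2 + (1 - α) * x u * x v) := by
  simp only [Amix, degM_eq, adjM_eq, add_mulVec, smul_mulVec, mulVec_diagonal,
    adjMatrix_mulVec_apply, dotProduct, Pi.add_apply, Pi.smul_apply, smul_eq_mul]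
  refine Finset.sum_congr rfl fun u _ => ?_
  simp only [Finset.sum_add_distrib, Finset.sum_const, card_neighborFinset_eq_degree, nsmul_eq_mul,
    mul_add, Finset.mul_sum]
  congr 1
  · ring
  · exact Finset.sum_congr rfl fun v _ => by ring

theorem sum_dotProduct_amix_mulVec_colorClassVector {ι : Type*} [Fintype ι] [DecidableEq ι]
    [DecidableEq V] {G : SimpleGraph V} [DecidableRel G.Adj] (c : G.Coloring ι) (α : ℝ) :
    ∑ i, colorClassVector c i ⬝ᵥ (Amix G α *ᵥ colorClassVector c i) =
      (∑ u, (G.degree u : ℝ)) * (Fintype.card ι * (α * Fintype.card ι - 1)) := by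
  have hpair : ∀ u, ∀ v ∈ G.neighborFinset u,
      ∑ i, (α * colorClassVector c i u ^ 2
          + (1 - α) * colorClassVector c i u * colorClassVector c i v) =
        Fintype.card ι * (α * Fintype.card ι - 1) := by
    intro u v huv
    have hne : c u ≠ c v := c.valid ((mem_neighborFinset G u v).1 huv)
    simp only [Finset.sum_add_distrib, ← Finset.mul_sum, sq, mul_assoc, sum_colorClassVector_mul,
      if_true, if_neg hne]
    ring
  simp only [dotProduct_amix_mulVec]
  rw [Finset.sum_comm, Finset.sum_mul]
  refine Finset.sum_congr rfl fun u _ => ?_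
  rw [Finset.sum_comm, Finset.sum_congr rfl (hpair u), Finset.sum_const,
    card_neighborFinset_eq_degree, nsmul_eq_mul]

theorem one_div_le_of_posSemidef_amix {G : SimpleGraph V} (hedge : G.edgeSet.Nonempty) {r : ℕ}
    (hcol : G.Colorable r) {α : ℝ} (hpsd : (Amix G α).PosSemidef) : 1 / (r : ℝ) ≤ α := by
  classical
  obtain ⟨c⟩ := hcol
  obtain ⟨⟨u, v⟩, huv⟩ := hedge
  have hr : (0 : ℝ) < r := by exact_mod_cast (c u).pos
  have hdeg : 0 < ∑ w, (G.degree w : ℝ) :=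
    Finset.sum_pos' (fun w _ => Nat.cast_nonneg _)
      ⟨u, Finset.mem_univ u, Nat.cast_pos.2 ((G.degree_pos_iff_exists_adj u).2 ⟨v, huv⟩)⟩
  have hnonneg : 0 ≤ ∑ i, colorClassVector c i ⬝ᵥ (Amix G α *ᵥ colorClassVector c i) :=
    Finset.sum_nonneg fun i _ => by simpa using hpsd.dotProduct_mulVec_nonneg (colorClassVector c i)
  rw [sum_dotProduct_amix_mulVec_colorClassVector, Fintype.card_fin] at hnonneg
  have hfactor : 0 ≤ α * r - 1 := nonneg_of_mul_nonneg_right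
    ((mul_nonneg_iff_of_pos_left hdeg).1 hnonneg) hr
  rw [div_le_iff₀ hr]
  linarith

end SimpleGraph

theorem stmt_16_general {V : Type*} [Fintype V] (G : SimpleGraph V)
    (hedge : G.edgeSet.Nonempty) (r : ℕ) (hcol : G.Colorable r) :
    1 / (r : ℝ) ≤ alpha0 G :=
  G.le_alpha0 fun _ hpsd => one_div_le_of_posSemidef_amix hedge hcol hpsd

/-- If G has an edge and is r-colorable with r ≥ 2, then α₀(G) ≥ 1/r. -/
theorem stmt_16 {V : Type*} [Fintype V] (G : SimpleGraph V)
    (hedge : G.edgeSet.Nonempty) (r : ℕ) (hr : 2 ≤ r) (hcol : G.Colorable r) :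
    1 / (r : ℝ) ≤ alpha0 G :=
  stmt_16_general G hedge r hcol
end
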